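/- arXiv:2512.14988 — 5 statements merged into one kernel-verified Lean document; each statement's English description precedes it below -/
import Mathlib

section
/- Fix maps i : U → V, j : V → V', and p : E → B in a finitely complete category C, with U, V, V' exponentiable. The set of uniform left-restricted lifting structures (i.e., natural families assigning to each X and each pair (u : X × U → E, v' : X × V' → B) with p∘u = v'∘(X×j)∘(X×i) a diagonal filler F_X(u,v') : X × V → E satisfying F_X(u,v')∘(X×i) = u and p∘F_X(u,v') = v'∘(X×j), natural in X) is in bijection with the set of morphisms from [U,E] ×_{[U,B]} [V',B] to [V,E] in the slice category C/([U,E] ×_{[U,B]} [V,B]). -/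
/-!
Currying both components identifies a lifting problem `(u, v')` over `X` with a map
`X ⟶ [U,E] ×_{[U,B]} [V',B]`, so this object carries a universal lifting problem, and every
problem is a pullback of it along its classifying map. By uniformity a lifting structure is
therefore determined by its filler of the universal problem, which curries to a map
`[U,E] ×_{[U,B]} [V',B] ⟶ [V,E]`; the two filler equations say exactly that this map lies over
`[U,E] ×_{[U,B]} [V,B]`. Conversely, such a map fills every problem through the classifying map,
uniformly because classifying maps are natural in `X`.
-/

open CategoryTheory CategoryTheory.Limits CategoryTheory.MonoidalCategory
open CategoryTheory.CartesianClosed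
open CategoryTheory.MonoidalClosed

universe v u
noncomputable section

variable {C : Type u} [Category.{v} C] [Limits.HasFiniteLimits C] [CartesianMonoidalCategory C]

/-- A uniform family of lifts of `i : U ⟶ V` against `p : E ⟶ B`, left-restricted along
`j : V ⟶ V'`: for every `X` and every lifting problem
`(u : X ⊗ U ⟶ E, v' : X ⊗ V' ⟶ B)` with `u ≫ p = (X ◁ (i ≫ j)) ≫ v'`, a diagonal filler
`X ⊗ V ⟶ E`, uniformly (naturally) in `X`. -/
structure UniformLiftLR {U V V' E B : C} (i : U ⟶ V) (j : V ⟶ V') (p : E ⟶ B) where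
  F : ∀ (X : C) (u : X ⊗ U ⟶ E) (v' : X ⊗ V' ⟶ B),
      u ≫ p = (X ◁ (i ≫ j)) ≫ v' → (X ⊗ V ⟶ E)
  fac_left : ∀ X u v' h, (X ◁ i) ≫ F X u v' h = u
  fac_right : ∀ X u v' h, F X u v' h ≫ p = (X ◁ j) ≫ v'
  uniform : ∀ {Y X : C} (t : Y ⟶ X) u v' h h',
    F Y ((t ▷ U) ≫ u) ((t ▷ V') ≫ v') h' = (t ▷ V) ≫ F X u v' h

namespace CategoryTheory.MonoidalClosed

variable {D : Type*} [Category D] [MonoidalCategory D] [BraidedCategory D] [MonoidalClosed D]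

/-- Currying with the exponent on the right of the tensor product. -/
def curryRight {X A Y : D} : (X ⊗ A ⟶ Y) ≃ (X ⟶ (ihom A).obj Y) :=
  ((ihom.adjunction A).ofNatIsoLeft (BraidedCategory.tensorLeftIsoTensorRight A)).homEquiv X Y

lemma curryRight_eq {X A Y : D} (f : X ⊗ A ⟶ Y) : curryRight f = curry ((β_ A X).hom ≫ f) := by
  rw [curryRight, Adjunction.homEquiv_unit, curry_eq]
  simp [Adjunction.ofNatIsoLeft, BraidedCategory.tensorLeftIsoTensorRight]

lemma curryRight_whiskerRight {Y X A Z : D} (t : Y ⟶ X) (f : X ⊗ A ⟶ Z) :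
    curryRight ((t ▷ A) ≫ f) = t ≫ curryRight f :=
  Adjunction.homEquiv_naturality_left _ _ _

lemma curryRight_comp_ihom_map {X A Y Z : D} (f : X ⊗ A ⟶ Y) (g : Y ⟶ Z) :
    curryRight f ≫ (ihom A).map g = curryRight (f ≫ g) :=
  (Adjunction.homEquiv_naturality_right _ _ _).symm

lemma curryRight_comp_pre {X A A' Y : D} (f : A' ⟶ A) (g : X ⊗ A ⟶ Y) :
    curryRight g ≫ (pre f).app Y = curryRight ((X ◁ f) ≫ g) := by
  rw [curryRight_eq, curryRight_eq, curry_pre_app, BraidedCategory.braiding_naturality_left_assoc]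

lemma curryRight_symm_comp {Y X A Z : D} (t : Y ⟶ X) (g : X ⟶ (ihom A).obj Z) :
    curryRight.symm (t ≫ g) = (t ▷ A) ≫ curryRight.symm g := by
  rw [Equiv.symm_apply_eq, curryRight_whiskerRight, Equiv.apply_symm_apply]

lemma curryRight_symm_comp_ihom_map {X A Y Z : D} (g : X ⟶ (ihom A).obj Y) (q : Y ⟶ Z) :
    curryRight.symm (g ≫ (ihom A).map q) = curryRight.symm g ≫ q := by
  rw [Equiv.symm_apply_eq, ← curryRight_comp_ihom_map, Equiv.apply_symm_apply]

lemma curryRight_symm_comp_pre {X A A' Y : D} (f : A' ⟶ A) (g : X ⟶ (ihom A).obj Y) :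
    curryRight.symm (g ≫ (pre f).app Y) = (X ◁ f) ≫ curryRight.symm g := by
  rw [Equiv.symm_apply_eq, ← curryRight_comp_pre, Equiv.apply_symm_apply]

end CategoryTheory.MonoidalClosed

attribute [local instance] BraidedCategory.ofCartesianMonoidalCategory

section LiftingProblems

variable [MonoidalClosed C] {U V V' E B : C} (i : U ⟶ V) (j : V ⟶ V') (p : E ⟶ B)

/-- The object `[U,E] ×_{[U,B]} [V',B]`, which classifies the lifting problems of `UniformLiftLR`. -/
abbrev liftingProblems : C := pullback ((ihom U).map p) ((pre (i ≫ j)).app B)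

def universalTop : liftingProblems i j p ⊗ U ⟶ E := curryRight.symm (pullback.fst _ _)

def universalBottom : liftingProblems i j p ⊗ V' ⟶ B := curryRight.symm (pullback.snd _ _)

lemma universalTop_comp : universalTop i j p ≫ p = (_ ◁ (i ≫ j)) ≫ universalBottom i j p := by
  rw [universalTop, universalBottom, ← curryRight_symm_comp_ihom_map, ← curryRight_symm_comp_pre,
    pullback.condition]

variable {i j p} {X : C} {u : X ⊗ U ⟶ E} {v' : X ⊗ V' ⟶ B} (h : u ≫ p = (X ◁ (i ≫ j)) ≫ v')

def classify : X ⟶ liftingProblems i j p :=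
  pullback.lift (curryRight u) (curryRight v')
    (by rw [curryRight_comp_ihom_map, curryRight_comp_pre, h])

@[simp] lemma classify_fst : classify h ≫ pullback.fst _ _ = curryRight u := pullback.lift_fst _ _ _

@[simp] lemma classify_snd : classify h ≫ pullback.snd _ _ = curryRight v' := pullback.lift_snd _ _ _

lemma whiskerRight_classify_universalTop : (classify h ▷ U) ≫ universalTop i j p = u := by
  rw [universalTop, ← curryRight_symm_comp, classify_fst, Equiv.symm_apply_apply]

lemma whiskerRight_classify_universalBottom : (classify h ▷ V') ≫ universalBottom i j p = v' := by
  rw [universalBottom, ← curryRight_symm_comp, classify_snd, Equiv.symm_apply_apply]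

variable (i j p) in
lemma classify_universal : classify (universalTop_comp i j p) = 𝟙 _ := by
  apply pullback.hom_ext <;> simp [universalTop, universalBottom]

end LiftingProblems

namespace UniformLiftLR

variable [MonoidalClosed C] {U V V' E B : C} {i : U ⟶ V} {j : V ⟶ V'} {p : E ⟶ B}

def universalFiller (S : UniformLiftLR i j p) : liftingProblems i j p ⟶ (ihom V).obj E :=
  curryRight (S.F _ _ _ (universalTop_comp i j p))

lemma F_eq_curryRight_symm_classify (S : UniformLiftLR i j p) {X : C} {u : X ⊗ U ⟶ E}
    {v' : X ⊗ V' ⟶ B} (h : u ≫ p = (X ◁ (i ≫ j)) ≫ v') :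
    S.F X u v' h = curryRight.symm (classify h ≫ S.universalFiller) := by
  have h' := S.uniform (classify h) _ _ (universalTop_comp i j p)
  simp only [whiskerRight_classify_universalTop, whiskerRight_classify_universalBottom] at h'
  rw [h' h, universalFiller, curryRight_symm_comp, Equiv.symm_apply_apply]

lemma universalFiller_comp_pre (S : UniformLiftLR i j p) :
    S.universalFiller ≫ (pre i).app E = pullback.fst _ _ := by
  rw [universalFiller, curryRight_comp_pre, S.fac_left, universalTop, Equiv.apply_symm_apply]

lemma universalFiller_comp_ihom_map (S : UniformLiftLR i j p) :
    S.universalFiller ≫ (ihom V).map p = pullback.snd _ _ ≫ (pre j).app B := by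
  rw [universalFiller, curryRight_comp_ihom_map, S.fac_right, ← curryRight_comp_pre,
    universalBottom, Equiv.apply_symm_apply]

def ofFiller (l : liftingProblems i j p ⟶ (ihom V).obj E)
    (hl_pre : l ≫ (pre i).app E = pullback.fst _ _)
    (hl_map : l ≫ (ihom V).map p = pullback.snd _ _ ≫ (pre j).app B) : UniformLiftLR i j p where
  F _ _ _ h := curryRight.symm (classify h ≫ l)
  fac_left _ _ _ h := by
    rw [← curryRight_symm_comp_pre, Category.assoc, hl_pre, classify_fst, Equiv.symm_apply_apply]
  fac_right _ _ _ h := by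
    rw [← curryRight_symm_comp_ihom_map, Category.assoc, hl_map, reassoc_of% (classify_snd h),
      curryRight_comp_pre, Equiv.symm_apply_apply]
  uniform t _ _ h h' := by
    rw [← curryRight_symm_comp, ← Category.assoc]
    congr 2
    apply pullback.hom_ext <;> simp [curryRight_whiskerRight]

lemma universalFiller_ofFiller (l : liftingProblems i j p ⟶ (ihom V).obj E) (hl_pre hl_map) :
    (ofFiller l hl_pre hl_map).universalFiller = l := by
  rw [universalFiller, ofFiller, Equiv.apply_symm_apply, classify_universal, Category.id_comp]

lemma ofFiller_universalFiller (S : UniformLiftLR i j p) :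
    ofFiller S.universalFiller S.universalFiller_comp_pre S.universalFiller_comp_ihom_map = S := by
  change UniformLiftLR.mk _ _ _ _ = UniformLiftLR.mk S.F S.fac_left S.fac_right S.uniform
  congr 1
  funext X u v' h
  exact (S.F_eq_curryRight_symm_classify h).symm

end UniformLiftLR

section Slice

variable [MonoidalClosed C] {U V V' E B : C} (i : U ⟶ V) (j : V ⟶ V') (p : E ⟶ B)

def restrictionOver : Over (pullback ((ihom U).map p) ((pre i).app B)) :=
  Over.mk (pullback.map ((ihom U).map p) ((pre (i ≫ j)).app B)
    ((ihom U).map p) ((pre i).app B) (𝟙 _) ((pre j).app B) (𝟙 _) (by simp) (by simp [pre_map]))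

def pullbackHomOver : Over (pullback ((ihom U).map p) ((pre i).app B)) :=
  Over.mk (pullback.lift ((pre i).app E) ((ihom V).map p) ((pre i).naturality p).symm)

variable {i j p}

lemma comp_pullbackHomOver_hom_eq_iff (l : liftingProblems i j p ⟶ (ihom V).obj E) :
    l ≫ (pullbackHomOver i p).hom = (restrictionOver i j p).hom ↔
      l ≫ (pre i).app E = pullback.fst _ _ ∧
        l ≫ (ihom V).map p = pullback.snd _ _ ≫ (pre j).app B := by
  simp only [pullbackHomOver, restrictionOver, Over.mk_hom, pullback.hom_ext_iff, Category.assoc,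
    pullback.lift_fst, pullback.lift_snd, pullback.map, Category.comp_id]

variable (i j p) in
def UniformLiftLR.equivOverHom :
    UniformLiftLR i j p ≃ (restrictionOver i j p ⟶ pullbackHomOver i p) where
  toFun S := Over.homMk S.universalFiller ((comp_pullbackHomOver_hom_eq_iff _).2
    ⟨S.universalFiller_comp_pre, S.universalFiller_comp_ihom_map⟩)
  invFun φ := UniformLiftLR.ofFiller φ.left ((comp_pullbackHomOver_hom_eq_iff _).1 (Over.w φ)).1
    ((comp_pullbackHomOver_hom_eq_iff _).1 (Over.w φ)).2
  left_inv := UniformLiftLR.ofFiller_universalFiller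
  right_inv φ := Over.OverMorphism.ext (UniformLiftLR.universalFiller_ofFiller φ.left _ _)

end Slice

/-- the set of uniform left-restricted lifting structures of `i` against `p`
restricted along `j` is in bijection with the set of morphisms
`[U,E] ×_{[U,B]} [V',B] ⟶ [V,E]` in the slice category over `[U,E] ×_{[U,B]} [V,B]`. -/
theorem stmt1 [MonoidalClosed C] {U V V' E B : C} (i : U ⟶ V) (j : V ⟶ V') (p : E ⟶ B) :
    Nonempty (UniformLiftLR i j p ≃
      (Over.mk (pullback.map ((ihom U).map p) ((pre (i ≫ j)).app B)
          ((ihom U).map p) ((pre i).app B) (𝟙 _) ((pre j).app B) (𝟙 _)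
          (by simp) (by simp [pre_map])) ⟶
       Over.mk (pullback.lift ((pre i).app E) ((ihom V).map p)
          ((pre i).naturality p).symm))) :=
  ⟨UniformLiftLR.equivOverHom i j p⟩
end
end

section
/- Fix maps i : U → V and p : E → B and q : B' → B in a finitely complete category C, with U, V exponentiable. The set of uniform right-restricted lifting structures of i against p restricted along q is in bijection with the set of morphisms from [U,E] ×_{[U,B]} [V,B'] to [V,E] in the slice category C/([U,E] ×_{[U,B]} [V,B]). -/
/-!
Lifting problems `(u, v)` of `i` against `p` restricted along `q` at stage `X` correspond,
by currying, to maps `X ⟶ [U,E] ×_{[U,B]} [V,B']`, naturally in `X`. Hence the pullback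
carries a universal lifting problem of which every other is a base change, and by the Yoneda
lemma a uniform choice of fillers is the same as a filler of this universal problem. Currying
once more, such a filler is a map `[U,E] ×_{[U,B]} [V,B'] ⟶ [V,E]` whose composites with
`[V,E] ⟶ [U,E]` and `[V,E] ⟶ [V,B]` are the projection and `[V,q]` after the projection,
i.e. a morphism over `[U,E] ×_{[U,B]} [V,B]`.
-/

open CategoryTheory CategoryTheory.Limits CategoryTheory.MonoidalCategory
open CategoryTheory.CartesianClosed

universe v u
noncomputable section

variable {C : Type u} [Category.{v} C] [Limits.HasFiniteLimits C] [CartesianMonoidalCategory C]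

/-- A uniform family of lifts of `i : U ⟶ V` against `p : E ⟶ B`, right-restricted along
`q : B' ⟶ B`: for every `X` and every lifting problem
`(u : X ⊗ U ⟶ E, v : X ⊗ V ⟶ B')` with `u ≫ p = (X ◁ i) ≫ v ≫ q`, a diagonal filler
`X ⊗ V ⟶ E`, uniformly (naturally) in `X`. -/
structure UniformLiftRR {U V E B B' : C} (i : U ⟶ V) (p : E ⟶ B) (q : B' ⟶ B) where
  F : ∀ (X : C) (u : X ⊗ U ⟶ E) (v : X ⊗ V ⟶ B'),
      u ≫ p = (X ◁ i) ≫ v ≫ q → (X ⊗ V ⟶ E)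
  fac_left : ∀ X u v h, (X ◁ i) ≫ F X u v h = u
  fac_right : ∀ X u v h, F X u v h ≫ p = v ≫ q
  uniform : ∀ {Y X : C} (t : Y ⟶ X) u v h h',
    F Y ((t ▷ U) ≫ u) ((t ▷ V) ≫ v) h' = (t ▷ V) ≫ F X u v h

end

open MonoidalClosed

noncomputable section

section FlipCurry

variable {C : Type u} [Category.{v} C] [MonoidalCategory C] [BraidedCategory C]
  [MonoidalClosed C]

def flipCurry {X V E : C} : (X ⊗ V ⟶ E) ≃ (X ⟶ V ⟹ E) where
  toFun f := curry ((β_ V X).hom ≫ f)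
  invFun g := (β_ V X).inv ≫ uncurry g
  left_inv f := by simp
  right_inv g := by simp

lemma flipCurry_apply {X V E : C} (f : X ⊗ V ⟶ E) :
    flipCurry f = curry ((β_ V X).hom ≫ f) := rfl

lemma flipCurry_whiskerRight_comp {Y X V E : C} (t : Y ⟶ X) (f : X ⊗ V ⟶ E) :
    flipCurry ((t ▷ V) ≫ f) = t ≫ flipCurry f := by
  rw [flipCurry_apply, flipCurry_apply, ← BraidedCategory.braiding_naturality_right_assoc,
    curry_natural_left]

lemma flipCurry_comp {X V E E' : C} (f : X ⊗ V ⟶ E) (g : E ⟶ E') :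
    flipCurry (f ≫ g) = flipCurry f ≫ (ihom V).map g := by
  rw [flipCurry_apply, flipCurry_apply, ← Category.assoc, curry_natural_right]

lemma flipCurry_comp_pre_app {X U V E : C} (i : U ⟶ V) (f : X ⊗ V ⟶ E) :
    flipCurry f ≫ (pre i).app E = flipCurry ((X ◁ i) ≫ f) := by
  rw [flipCurry_apply, flipCurry_apply, curry_pre_app,
    BraidedCategory.braiding_naturality_left_assoc]

end FlipCurry

namespace LiftingProblem

variable {C : Type u} [Category.{v} C] [MonoidalCategory C] [MonoidalClosed C] [HasPullbacks C]
  {U V E B B' : C} (i : U ⟶ V) (p : E ⟶ B) (q : B' ⟶ B)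

abbrev classifier : C := pullback ((ihom U).map p) ((ihom V).map q ≫ (pre i).app B)

abbrev pullbackHom : Over (pullback ((ihom U).map p) ((pre i).app B)) :=
  Over.mk (pullback.lift ((pre i).app E) ((ihom V).map p) ((pre i).naturality p).symm)

abbrev classifierOver : Over (pullback ((ihom U).map p) ((pre i).app B)) :=
  Over.mk (pullback.map ((ihom U).map p) ((ihom V).map q ≫ (pre i).app B)
    ((ihom U).map p) ((pre i).app B) (𝟙 _) ((ihom V).map q) (𝟙 _) (by simp) (by simp))

lemma comp_pullbackHom_eq_iff (g : classifier i p q ⟶ V ⟹ E) :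
    g ≫ (pullbackHom i p).hom = (classifierOver i p q).hom ↔
      g ≫ (pre i).app E = pullback.fst _ _ ∧
        g ≫ (ihom V).map p = pullback.snd _ _ ≫ (ihom V).map q := by
  simp only [Over.mk_hom]
  constructor
  · intro h
    constructor
    · simpa only [Category.assoc, pullback.lift_fst, pullback.map, Category.comp_id]
        using h =≫ pullback.fst _ _
    · simpa only [Category.assoc, pullback.lift_snd, pullback.map] using h =≫ pullback.snd _ _
  · rintro ⟨h_fst, h_snd⟩
    apply pullback.hom_ext <;>
      simp only [Category.assoc, pullback.lift_fst, pullback.lift_snd, pullback.map,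
        Category.comp_id, h_fst, h_snd]

variable [BraidedCategory C]

def univLeft : classifier i p q ⊗ U ⟶ E := flipCurry.symm (pullback.fst _ _)

def univRight : classifier i p q ⊗ V ⟶ B' := flipCurry.symm (pullback.snd _ _)

lemma flipCurry_univLeft : flipCurry (univLeft i p q) = pullback.fst _ _ :=
  flipCurry.apply_symm_apply _

lemma flipCurry_univRight : flipCurry (univRight i p q) = pullback.snd _ _ :=
  flipCurry.apply_symm_apply _

lemma univ_comm : univLeft i p q ≫ p = (classifier i p q ◁ i) ≫ univRight i p q ≫ q := by
  apply flipCurry.injective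
  rw [flipCurry_comp, flipCurry_univLeft, pullback.condition, ← flipCurry_univRight,
    ← Category.assoc, ← flipCurry_comp, flipCurry_comp_pre_app]

variable {i p q}

def classify {X : C} (u : X ⊗ U ⟶ E) (v : X ⊗ V ⟶ B') (h : u ≫ p = (X ◁ i) ≫ v ≫ q) :
    X ⟶ classifier i p q :=
  pullback.lift (flipCurry u) (flipCurry v) (by
    rw [← flipCurry_comp, h, ← flipCurry_comp_pre_app, flipCurry_comp, Category.assoc])

@[simp]
lemma classify_fst {X : C} (u : X ⊗ U ⟶ E) (v : X ⊗ V ⟶ B')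
    (h : u ≫ p = (X ◁ i) ≫ v ≫ q) :
    classify u v h ≫ pullback.fst _ _ = flipCurry u :=
  pullback.lift_fst _ _ _

@[simp]
lemma classify_snd {X : C} (u : X ⊗ U ⟶ E) (v : X ⊗ V ⟶ B')
    (h : u ≫ p = (X ◁ i) ≫ v ≫ q) :
    classify u v h ≫ pullback.snd _ _ = flipCurry v :=
  pullback.lift_snd _ _ _

lemma whiskerRight_classify_univLeft {X : C} (u : X ⊗ U ⟶ E) (v : X ⊗ V ⟶ B')
    (h : u ≫ p = (X ◁ i) ≫ v ≫ q) :
    (classify u v h ▷ U) ≫ univLeft i p q = u := by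
  apply flipCurry.injective
  rw [flipCurry_whiskerRight_comp, flipCurry_univLeft, classify_fst]

lemma whiskerRight_classify_univRight {X : C} (u : X ⊗ U ⟶ E) (v : X ⊗ V ⟶ B')
    (h : u ≫ p = (X ◁ i) ≫ v ≫ q) :
    (classify u v h ▷ V) ≫ univRight i p q = v := by
  apply flipCurry.injective
  rw [flipCurry_whiskerRight_comp, flipCurry_univRight, classify_snd]

lemma classify_whiskerRight_comp {Y X : C} (t : Y ⟶ X) (u : X ⊗ U ⟶ E) (v : X ⊗ V ⟶ B')
    (h : u ≫ p = (X ◁ i) ≫ v ≫ q) (h') :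
    classify ((t ▷ U) ≫ u) ((t ▷ V) ≫ v) h' = t ≫ classify u v h := by
  apply pullback.hom_ext <;> simp [flipCurry_whiskerRight_comp]

lemma classify_univ : classify (univLeft i p q) (univRight i p q) (univ_comm i p q) = 𝟙 _ := by
  apply pullback.hom_ext <;> simp [flipCurry_univLeft, flipCurry_univRight]

variable (i p q)

abbrev UniversalFiller : Type v :=
  { f : classifier i p q ⊗ V ⟶ E //
    (classifier i p q ◁ i) ≫ f = univLeft i p q ∧ f ≫ p = univRight i p q ≫ q }

lemma fills_univ_iff (f : classifier i p q ⊗ V ⟶ E) :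
    ((classifier i p q ◁ i) ≫ f = univLeft i p q ∧ f ≫ p = univRight i p q ≫ q) ↔
      flipCurry f ≫ (pre i).app E = pullback.fst _ _ ∧
        flipCurry f ≫ (ihom V).map p = pullback.snd _ _ ≫ (ihom V).map q := by
  rw [flipCurry_comp_pre_app, ← flipCurry_comp, ← flipCurry_univLeft, ← flipCurry_univRight,
    ← flipCurry_comp, flipCurry.injective.eq_iff, flipCurry.injective.eq_iff]

def universalFillerEquivOverHom :
    UniversalFiller i p q ≃ (classifierOver i p q ⟶ pullbackHom i p) where
  toFun f := Over.homMk (flipCurry f.1)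
    (((comp_pullbackHom_eq_iff i p q _).mpr ((fills_univ_iff i p q _).mp f.2)))
  invFun k := ⟨flipCurry.symm k.left, (fills_univ_iff i p q _).mpr (by
    rw [Equiv.apply_symm_apply, ← comp_pullbackHom_eq_iff]
    exact Over.w k)⟩
  left_inv f := Subtype.ext (flipCurry.symm_apply_apply f.1)
  right_inv k := Over.OverMorphism.ext (flipCurry.apply_symm_apply k.left)

end LiftingProblem

attribute [local instance] BraidedCategory.ofCartesianMonoidalCategory

attribute [ext] UniformLiftRR

section Cartesian

open LiftingProblem

variable {C : Type u} [Category.{v} C] [CartesianMonoidalCategory C] [MonoidalClosed C]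
  [HasPullbacks C] {U V E B B' : C} (i : U ⟶ V) (p : E ⟶ B) (q : B' ⟶ B)

def UniformLiftRR.equivUniversalFiller : UniformLiftRR i p q ≃ UniversalFiller i p q where
  toFun L := ⟨L.F _ _ _ (univ_comm i p q), L.fac_left .., L.fac_right ..⟩
  invFun f :=
    { F X u v h := (classify u v h ▷ V) ≫ f.1
      fac_left X u v h := by
        rw [whisker_exchange_assoc, f.2.1, whiskerRight_classify_univLeft]
      fac_right X u v h := by
        rw [Category.assoc, f.2.2, ← Category.assoc, whiskerRight_classify_univRight]
      uniform t u v h h' := by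
        rw [classify_whiskerRight_comp t u v h h', comp_whiskerRight, Category.assoc] }
  left_inv L := by
    ext X u v h
    dsimp only
    rw [← L.uniform _ _ _ _
      (by rwa [whiskerRight_classify_univLeft, whiskerRight_classify_univRight])]
    congr 1
    · exact whiskerRight_classify_univLeft u v h
    · exact whiskerRight_classify_univRight u v h
  right_inv f := Subtype.ext (by simp only [classify_univ, id_whiskerRight, Category.id_comp])

end Cartesian

variable {C : Type u} [Category.{v} C] [Limits.HasFiniteLimits C] [CartesianMonoidalCategory C]

/-- the set of uniform right-restricted lifting structures of `i` against `p`
restricted along `q` is in bijection with the set of morphisms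
`[U,E] ×_{[U,B]} [V,B'] ⟶ [V,E]` in the slice category over `[U,E] ×_{[U,B]} [V,B]`. -/
theorem stmt2 [MonoidalClosed C] {U V E B B' : C} (i : U ⟶ V) (p : E ⟶ B) (q : B' ⟶ B) :
    Nonempty (UniformLiftRR i p q ≃
      (Over.mk (pullback.map ((ihom U).map p) ((ihom V).map q ≫ (MonoidalClosed.pre i).app B)
          ((ihom U).map p) ((MonoidalClosed.pre i).app B) (𝟙 _) ((ihom V).map q) (𝟙 _)
          (by simp) (by simp)) ⟶
       Over.mk (pullback.lift ((MonoidalClosed.pre i).app E) ((ihom V).map p)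
          ((MonoidalClosed.pre i).naturality p).symm))) :=
  ⟨(UniformLiftRR.equivUniversalFiller i p q).trans
    (LiftingProblem.universalFillerEquivOverHom i p q)⟩
end
end

section
/- Let C be a locally cartesian closed model category in which the pullback-power (pullback-hom) of every (trivial cofibration, fibration) pair and every (cofibration, trivial fibration) pair admits a section. Then for every map i : U → V and p : E → B such that (i,p) is either a (trivial cofibration, fibration) pair or a (cofibration, trivial fibration) pair, there exists a uniform lifting structure of i against p, i.e., a natural-in-X choice of diagonal fillers for all lifting problems of X × i against p. -/
open CategoryTheory CategoryTheory.Limits CategoryTheory.MonoidalCategory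
open CategoryTheory.CartesianClosed

universe v u
noncomputable section

variable {C : Type u} [Category.{v} C] [Limits.HasFiniteLimits C] [CartesianMonoidalCategory C]

/-- `CartesianClosed`, `exp` and `pre` as in the older Mathlib (removed since). -/
abbrev CartesianClosed (D : Type*) [Category D] [CartesianMonoidalCategory D] := MonoidalClosed D

abbrev exp (A : C) [Closed A] : C ⥤ C := ihom A

abbrev pre {A B : C} (f : B ⟶ A) [Closed A] [Closed B] : exp A ⟶ exp B := MonoidalClosed.pre f

/-- A uniform lifting structure of `i : U ⟶ V` against `p : E ⟶ B`: a natural-in-`X`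
choice of diagonal fillers for all lifting problems of `X × i` against `p`. -/
structure UniformLift {U V E B : C} (i : U ⟶ V) (p : E ⟶ B) where
  F : ∀ (X : C) (u : X ⊗ U ⟶ E) (v : X ⊗ V ⟶ B),
      u ≫ p = (X ◁ i) ≫ v → (X ⊗ V ⟶ E)
  fac_left : ∀ X u v h, (X ◁ i) ≫ F X u v h = u
  fac_right : ∀ X u v h, F X u v h ≫ p = v
  uniform : ∀ {Y X : C} (t : Y ⟶ X) u v h h',
    F Y ((t ▷ U) ≫ u) ((t ▷ V) ≫ v) h' = (t ▷ V) ≫ F X u v h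

/-- The pullback-power (pullback-hom) of `i : U ⟶ V` against `p : E ⟶ B`:
the canonical map `[V,E] ⟶ [U,E] ×_{[U,B]} [V,B]`. -/
def pbPower [CartesianClosed C] {U V E B : C} (i : U ⟶ V) (p : E ⟶ B) :
    (V ⟹ E) ⟶ pullback ((exp U).map p) ((pre i).app B) :=
  pullback.lift ((pre i).app E) ((exp V).map p) ((pre i).naturality p).symm


open MonoidalClosed (curry uncurry curry_natural_left curry_natural_right uncurry_natural_left
  uncurry_natural_right uncurry_curry)

section

variable {D : Type*} [Category D] [CartesianMonoidalCategory D] [MonoidalClosed D]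

theorem uncurry_comp_pre_app {A A' Y E : D} (f : A' ⟶ A) (g : Y ⟶ A ⟹ E) :
    uncurry (g ≫ (MonoidalClosed.pre f).app E) = (f ▷ Y) ≫ uncurry g := by
  rw [MonoidalClosed.uncurry_eq, MonoidalClosed.uncurry_eq, whiskerLeft_comp, Category.assoc,
    MonoidalClosed.id_tensor_pre_app_comp_ev, ← whisker_exchange_assoc]

theorem curry_comp_pre_app {A A' X E : D} (f : A' ⟶ A) (w : A ⊗ X ⟶ E) :
    curry w ≫ (MonoidalClosed.pre f).app E = curry ((f ▷ X) ≫ w) := by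
  apply MonoidalClosed.uncurry_injective
  rw [uncurry_comp_pre_app, uncurry_curry, uncurry_curry]

end

attribute [local instance] BraidedCategory.ofCartesianMonoidalCategory

section LiftingProblem

variable [CartesianClosed C] {U V E B : C} {i : U ⟶ V} {p : E ⟶ B}

def liftingProblemTranspose {X : C} {u : X ⊗ U ⟶ E} {v : X ⊗ V ⟶ B}
    (h : u ≫ p = (X ◁ i) ≫ v) : X ⟶ pullback ((exp U).map p) ((pre i).app B) :=
  pullback.lift (curry ((β_ U X).hom ≫ u)) (curry ((β_ V X).hom ≫ v)) <| by
    rw [← curry_natural_right, curry_comp_pre_app, Category.assoc, h,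
      BraidedCategory.braiding_naturality_left_assoc]

theorem pbPower_fst : pbPower i p ≫ pullback.fst _ _ = (pre i).app E :=
  pullback.lift_fst _ _ _

theorem pbPower_snd : pbPower i p ≫ pullback.snd _ _ = (exp V).map p :=
  pullback.lift_snd _ _ _

theorem liftingProblemTranspose_fst {X : C} {u : X ⊗ U ⟶ E} {v : X ⊗ V ⟶ B}
    (h : u ≫ p = (X ◁ i) ≫ v) :
    liftingProblemTranspose h ≫ pullback.fst _ _ = curry ((β_ U X).hom ≫ u) :=
  pullback.lift_fst _ _ _

theorem liftingProblemTranspose_snd {X : C} {u : X ⊗ U ⟶ E} {v : X ⊗ V ⟶ B}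
    (h : u ≫ p = (X ◁ i) ≫ v) :
    liftingProblemTranspose h ≫ pullback.snd _ _ = curry ((β_ V X).hom ≫ v) :=
  pullback.lift_snd _ _ _

theorem comp_liftingProblemTranspose {Y X : C} (t : Y ⟶ X) {u : X ⊗ U ⟶ E} {v : X ⊗ V ⟶ B}
    (h : u ≫ p = (X ◁ i) ≫ v) (h' : ((t ▷ U) ≫ u) ≫ p = (Y ◁ i) ≫ (t ▷ V) ≫ v) :
    t ≫ liftingProblemTranspose h = liftingProblemTranspose h' := by
  apply pullback.hom_ext
  · rw [Category.assoc, liftingProblemTranspose_fst, liftingProblemTranspose_fst,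
      ← curry_natural_left, BraidedCategory.braiding_naturality_right_assoc]
  · rw [Category.assoc, liftingProblemTranspose_snd, liftingProblemTranspose_snd,
      ← curry_natural_left, BraidedCategory.braiding_naturality_right_assoc]

variable {X : C} {u : X ⊗ U ⟶ E} {v : X ⊗ V ⟶ B} {h : u ≫ p = (X ◁ i) ≫ v}

theorem liftingProblem_fac_left_of_comp_pbPower {ℓ : X ⟶ V ⟹ E}
    (hℓ : ℓ ≫ pbPower i p = liftingProblemTranspose h) :
    (X ◁ i) ≫ (β_ X V).hom ≫ uncurry ℓ = u := by
  have hfst : ℓ ≫ (pre i).app E = curry ((β_ U X).hom ≫ u) := by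
    rw [← pbPower_fst, ← liftingProblemTranspose_fst h, ← hℓ, Category.assoc]
  rw [BraidedCategory.braiding_naturality_right_assoc, ← uncurry_comp_pre_app, hfst,
    uncurry_curry, SymmetricCategory.symmetry_assoc]

theorem liftingProblem_fac_right_of_comp_pbPower {ℓ : X ⟶ V ⟹ E}
    (hℓ : ℓ ≫ pbPower i p = liftingProblemTranspose h) :
    ((β_ X V).hom ≫ uncurry ℓ) ≫ p = v := by
  have hsnd : ℓ ≫ (exp V).map p = curry ((β_ V X).hom ≫ v) := by
    rw [← pbPower_snd, ← liftingProblemTranspose_snd h, ← hℓ, Category.assoc]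
  rw [Category.assoc, ← uncurry_natural_right, hsnd, uncurry_curry,
    SymmetricCategory.symmetry_assoc]

end LiftingProblem

/-- Transpose the lifting problem to a point of the pullback, apply `s` and transpose back;
uniformity in `X` is the naturality of transposition. -/
def UniformLift.ofSection [CartesianClosed C] {U V E B : C} {i : U ⟶ V} {p : E ⟶ B}
    (s : pullback ((exp U).map p) ((pre i).app B) ⟶ (V ⟹ E)) (hs : s ≫ pbPower i p = 𝟙 _) :
    UniformLift i p where
  F _ _ _ h := (β_ _ V).hom ≫ uncurry (liftingProblemTranspose h ≫ s)
  fac_left _ _ _ h :=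
    liftingProblem_fac_left_of_comp_pbPower (h := h) (by rw [Category.assoc, hs, Category.comp_id])
  fac_right _ _ _ h :=
    liftingProblem_fac_right_of_comp_pbPower (h := h) (by rw [Category.assoc, hs, Category.comp_id])
  uniform t _ _ h h' := by
    rw [← comp_liftingProblemTranspose t h h', Category.assoc, uncurry_natural_left,
      BraidedCategory.braiding_naturality_left_assoc]

/-- in a locally cartesian closed model category where the pullback-power of
every (trivial cofibration, fibration)- and every (cofibration, trivial fibration)-pair
admits a section, every such pair `(i, p)` admits a uniform lifting structure. -/
theorem stmt3 [CartesianClosed C]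
    [∀ X : C, CartesianMonoidalCategory (Over X)] [∀ X : C, CartesianClosed (Over X)]
    (cof fib weq : MorphismProperty C)
    (hsec : ∀ {U V E B : C} (i : U ⟶ V) (p : E ⟶ B),
      ((cof i ∧ weq i ∧ fib p) ∨ (cof i ∧ fib p ∧ weq p)) →
      ∃ s : pullback ((exp U).map p) ((pre i).app B) ⟶ (V ⟹ E),
        s ≫ pbPower i p = 𝟙 _)
    {U V E B : C} (i : U ⟶ V) (p : E ⟶ B)
    (h : (cof i ∧ weq i ∧ fib p) ∨ (cof i ∧ fib p ∧ weq p)) :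
    Nonempty (UniformLift i p) :=
  let ⟨s, hs⟩ := hsec i p h
  ⟨UniformLift.ofSection s hs⟩
end
end

section
/- Let C be a cartesian closed finitely complete category with exponentiable objects ∂L, L, L' and maps ∂L → L → L' and E → Ē. Then the square with top map [L,E] ×_{[L,Ē]} [L',Ē] → [L,E] (projection), left map [L,E] ×_{[L,Ē]} [L',Ē] → [∂L,E] ×_{[∂L,Ē]} [L',Ē] (induced by restriction along ∂L → L on the first factor), right map [L,E] → [∂L,E] ×_{[∂L,Ē]} [L,Ē] (the pullback-hom), and bottom map [∂L,E] ×_{[∂L,Ē]} [L',Ē] → [∂L,E] ×_{[∂L,Ē]} [L,Ē] (induced by [L',Ē] → [L,Ē]), is a pullback square. -/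
open CategoryTheory CategoryTheory.Limits CategoryTheory.MonoidalCategory
open CategoryTheory.CartesianClosed

universe v u
noncomputable section

variable {C : Type u} [Category.{v} C] [Limits.HasFiniteLimits C] [CartesianMonoidalCategory C]

/-!
Write `a : [L,E] ⟶ [L,Ē]`, `b : [L',Ē] ⟶ [L,Ē]`, `d : [∂L,E] ⟶ [∂L,Ē]` and let `r`, `r'` be
restriction along `∂L → L`, so that `[∂L,E] ×_{[∂L,Ē]} [L',Ē]` is the pullback of `d` along
`b ≫ r'`. Pulling back `d` first along `r'` and then along `b` gives the same object, so the bottom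
map of the square is the base change of `b`, a pullback square lying over `b`. Pasting the square
of the statement on top of it yields the square defining `[L,E] ×_{[L,Ē]} [L',Ē]` as the pullback
of `a` along `b`, and the pasting lemma shows that the upper square is a pullback.
-/

namespace CategoryTheory.Limits

theorem isPullback_pullbackMap_snd {𝒞 : Type*} [Category 𝒞] {X Y Y' Z : 𝒞} (f : X ⟶ Z)
    {k : Y ⟶ Z} (g : Y ⟶ Y') (g' : Y' ⟶ Z) (hk : k = g ≫ g') [HasPullback f k]
    [HasPullback f g'] :
    IsPullback (pullback.map f k f g' (𝟙 X) g (𝟙 Z) (by simp) (by simp [hk]))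
      (pullback.snd f k) (pullback.snd f g') g := by
  refine .of_right ?_ (pullback.lift_snd _ _ _) (.of_hasPullback f g')
  convert IsPullback.of_hasPullback f k using 1
  · exact (pullback.lift_fst _ _ _).trans (Category.comp_id _)
  · exact hk.symm

theorem isPullback_fst_pullbackMap {𝒞 : Type*} [Category 𝒞] {A B B' D D' : 𝒞}
    (a : A ⟶ B) (b : B' ⟶ B) (d : D ⟶ D') (r : A ⟶ D) (r' : B ⟶ D') {k : B' ⟶ D'}
    (w : a ≫ r' = r ≫ d) (hk : k = b ≫ r') [HasPullback a b] [HasPullback d k]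
    [HasPullback d r'] :
    IsPullback (pullback.fst a b)
      (pullback.map a b d k r (𝟙 B') r' w (by simp [hk]))
      (pullback.lift r a w.symm)
      (pullback.map d k d r' (𝟙 D) b (𝟙 D') (by simp) (by simp [hk])) := by
  subst hk
  refine .of_bot ?_ ?_ (isPullback_pullbackMap_snd d b r' rfl)
  · simpa only [pullback.lift_snd, Category.comp_id] using IsPullback.of_hasPullback a b
  · apply pullback.hom_ext <;>
      simp only [pullback.map, Category.assoc, pullback.lift_fst, pullback.lift_snd,
        pullback.lift_snd_assoc, Category.comp_id]
    exact pullback.condition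

end CategoryTheory.Limits

/-- for `∂L → L → L'` and `E → Ē`, the square
`[L,E] ×_{[L,Ē]} [L',Ē] → [L,E] → [∂L,E] ×_{[∂L,Ē]} [L,Ē]` (top-right) and
`[L,E] ×_{[L,Ē]} [L',Ē] → [∂L,E] ×_{[∂L,Ē]} [L',Ē] → [∂L,E] ×_{[∂L,Ē]} [L,Ē]`
(left-bottom) is a pullback square. -/
theorem stmt12 [MonoidalClosed C] {dL L L' E Ebar : C}
    (l : dL ⟶ L) (l' : L ⟶ L') (e : E ⟶ Ebar) :
    IsPullback
      -- top: projection [L,E] ×_{[L,Ē]} [L',Ē] ⟶ [L,E]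
      (pullback.fst ((ihom L).map e) ((MonoidalClosed.pre l').app Ebar))
      -- left: restriction along ∂L → L on the first factor
      (pullback.map ((ihom L).map e) ((MonoidalClosed.pre l').app Ebar)
        ((ihom dL).map e) ((MonoidalClosed.pre (l ≫ l')).app Ebar)
        ((MonoidalClosed.pre l).app E) (𝟙 _) ((MonoidalClosed.pre l).app Ebar)
        ((MonoidalClosed.pre l).naturality e) (by simp [MonoidalClosed.pre_map]))
      -- right: the pullback-hom [L,E] ⟶ [∂L,E] ×_{[∂L,Ē]} [L,Ē]
      (pullback.lift ((MonoidalClosed.pre l).app E) ((ihom L).map e) ((MonoidalClosed.pre l).naturality e).symm)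
      -- bottom: induced by [L',Ē] ⟶ [L,Ē]
      (pullback.map ((ihom dL).map e) ((MonoidalClosed.pre (l ≫ l')).app Ebar)
        ((ihom dL).map e) ((MonoidalClosed.pre l).app Ebar)
        (𝟙 _) ((MonoidalClosed.pre l').app Ebar) (𝟙 _) (by simp) (by simp [MonoidalClosed.pre_map])) :=
  isPullback_fst_pullbackMap _ _ _ _ _ ((MonoidalClosed.pre l).naturality e)
    (by rw [MonoidalClosed.pre_map]; rfl)
end
end

section
/- Let C be a locally cartesian closed model category in which I is a good cylinder object for the terminal object and cofibrations are preserved by binary products (X × - preserves cofibrations). Fix a map E → B, an exponentiable object A, and a factorization [A,E] --q--> C₀ → [A,B] of the postcomposition map, where q is a trivial fibration. Let P^I_B(E) := [I,E] ×_{[I,B]} B be the fibred I-path object with endpoint evaluation ev_∂ : P^I_B(E) → E ×_B E. Then for any object D, map d : D → C₀, and pair of maps f₀, f₁ : D → [A,E] with q∘f₀ = q∘f₁ = d, there exists H : D → [A, P^I_B(E)] such that [A, ev_∂] ∘ H = (f₀, f₁) : D → [A, E ×_B E]. -/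
open CategoryTheory CategoryTheory.Limits CategoryTheory.MonoidalCategory
open CategoryTheory.CartesianClosed CartesianMonoidalCategory

universe v u
noncomputable section

variable {C : Type u} [Category.{v} C] [Limits.HasFiniteLimits C] [CartesianMonoidalCategory C]
variable [MonoidalClosed C]

/-- Evaluation of an `I`-indexed family at a point `t : 1 ⟶ I`. -/
def evAt {I X : C} (t : 𝟙_ C ⟶ I) : (I ⟹ X) ⟶ X :=
  lift (toUnit _ ≫ t) (𝟙 _) ≫ (ihom.ev I).app X

lemma evAt_nat {I X Y : C} (t : 𝟙_ C ⟶ I) (f : X ⟶ Y) :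
    (ihom I).map f ≫ evAt t = evAt t ≫ f := by
  have h : (I ◁ (ihom I).map f) ≫ (ihom.ev I).app Y = (ihom.ev I).app X ≫ f :=
    (ihom.ev I).naturality f
  rw [evAt, evAt, Category.assoc, ← h, ← Category.assoc, ← Category.assoc, comp_lift]
  have : lift (toUnit (I ⟹ X) ≫ t) (𝟙 (I ⟹ X)) ≫ (I ◁ (ihom I).map f)
      = lift (toUnit _ ≫ t) ((ihom I).map f) := by ext <;> simp
  rw [this]
  congr 2
  · rw [← Category.assoc, toUnit_unique ((ihom I).map f ≫ toUnit _) (toUnit _)]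
  · rw [Category.comp_id]

lemma const_evAt {I B : C} (t : 𝟙_ C ⟶ I) :
    MonoidalClosed.curry (CartesianMonoidalCategory.snd I B) ≫ evAt t = 𝟙 B := by
  rw [evAt, ← Category.assoc, comp_lift]
  have : lift (MonoidalClosed.curry (snd I B) ≫ toUnit (I ⟹ B) ≫ t)
        (MonoidalClosed.curry (snd I B) ≫ 𝟙 (I ⟹ B))
      = lift (toUnit B ≫ t) (𝟙 B) ≫ (I ◁ MonoidalClosed.curry (snd I B)) := by
    ext
    · simp only [lift_fst, whiskerLeft_fst, Category.assoc]
      rw [← Category.assoc,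
        toUnit_unique (MonoidalClosed.curry (snd I B) ≫ toUnit _) (toUnit _)]
    · simp
  rw [this, Category.assoc, ← MonoidalClosed.uncurry_eq, MonoidalClosed.uncurry_curry,
    lift_snd]

/-- The fibred `I`-path object `P^I_B(E) = [I,E] ×_{[I,B]} B` of `p : E ⟶ B`, where
`B ⟶ [I,B]` is the transpose of the projection (constant paths). -/
def pathObj (I : C) {E B : C} (p : E ⟶ B) : C :=
  pullback ((ihom I).map p) (MonoidalClosed.curry (CartesianMonoidalCategory.snd I B))

lemma pathObj_fst_evAt (I : C) {E B : C} (p : E ⟶ B) (t : 𝟙_ C ⟶ I) :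
    pullback.fst ((ihom I).map p) (MonoidalClosed.curry (CartesianMonoidalCategory.snd I B)) ≫
        evAt t ≫ p
      = pullback.snd _ _ := by
  rw [← evAt_nat, ← Category.assoc, pullback.condition, Category.assoc, const_evAt,
    Category.comp_id]

/-- The endpoint evaluation `ev_∂ : P^I_B(E) ⟶ E ×_B E`, with endpoints given by the two
points `inl ≫ c, inr ≫ c : 1 ⟶ I` of the cylinder `c : 1 ⊔ 1 ⟶ I`. -/
def evBdry [HasBinaryCoproducts C] {I E B : C} (c : (𝟙_ C) ⨿ (𝟙_ C) ⟶ I) (p : E ⟶ B) :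
    pathObj I p ⟶ pullback p p :=
  pullback.lift
    (pullback.fst ((ihom I).map p) (MonoidalClosed.curry (CartesianMonoidalCategory.snd I B)) ≫
      evAt (coprod.inl ≫ c))
    (pullback.fst ((ihom I).map p) (MonoidalClosed.curry (CartesianMonoidalCategory.snd I B)) ≫
      evAt (coprod.inr ≫ c))
    (by exact (Category.assoc _ _ _).trans ((pathObj_fst_evAt I p _).trans
      ((pathObj_fst_evAt I p _).symm.trans (Category.assoc _ _ _).symm)))

/-! Since `D ⊗ -` preserves binary coproducts, the pair `(f₀, f₁)` is a single map
`D ⊗ (1 ⨿ 1) ⟶ [A,E]`. Lifting it against the trivial fibration `q` along the cofibration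
`D ◁ c` gives a homotopy `w : D ⊗ I ⟶ [A,E]` lying over `C₀`, hence over `[A,B]`.
Transposing `w` along `A ⊗ (D ⊗ I) ≅ I ⊗ (A ⊗ D)` gives a map `A ⊗ D ⟶ [I,E]` over the
constant paths in `[I,B]`, that is, a map `D ⟶ [A, P^I_B(E)]`; its endpoints are `f₀` and `f₁`. -/

section Cartesian

variable {K : Type*} [Category K] [CartesianMonoidalCategory K]

lemma exists_homotopy_of_hasLiftingProperty [HasBinaryCoproducts K] [IsMonoidalLeftDistrib K]
    {I D X Y : K} (c : 𝟙_ K ⨿ 𝟙_ K ⟶ I) (q : X ⟶ Y)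
    [HasLiftingProperty (D ◁ c) q] (f₀ f₁ : D ⟶ X) (h : f₀ ≫ q = f₁ ≫ q) :
    ∃ w : D ⊗ I ⟶ X, (ρ_ D).inv ≫ D ◁ (coprod.inl ≫ c) ≫ w = f₀ ∧
      (ρ_ D).inv ≫ D ◁ (coprod.inr ≫ c) ≫ w = f₁ ∧ w ≫ q = fst D I ≫ f₀ ≫ q := by
  let u : D ⊗ (𝟙_ K ⨿ 𝟙_ K) ⟶ X :=
    (leftDistrib D _ _).inv ≫ coprod.desc ((ρ_ D).hom ≫ f₀) ((ρ_ D).hom ≫ f₁)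
  have hu₀ : D ◁ coprod.inl ≫ u = (ρ_ D).hom ≫ f₀ := by
    simp only [u, whiskerLeft_coprod_inl_leftDistrib_inv_assoc, coprod.inl_desc]
  have hu₁ : D ◁ coprod.inr ≫ u = (ρ_ D).hom ≫ f₁ := by
    simp only [u, whiskerLeft_coprod_inr_leftDistrib_inv_assoc, coprod.inr_desc]
  have sq : CommSq u (D ◁ c) q (fst D I ≫ f₀ ≫ q) := ⟨by
    rw [← cancel_epi (leftDistrib D _ _).hom]
    ext
    · simp only [coprod_inl_leftDistrib_hom_assoc, reassoc_of% hu₀, whiskerLeft_fst_assoc,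
        rightUnitor_hom]
    · simp only [coprod_inr_leftDistrib_hom_assoc, reassoc_of% hu₁, whiskerLeft_fst_assoc,
        rightUnitor_hom, h]⟩
  refine ⟨sq.lift, ?_, ?_, sq.fac_right⟩
  · rw [MonoidalCategory.whiskerLeft_comp_assoc, sq.fac_left, hu₀, Iso.inv_hom_id_assoc]
  · rw [MonoidalCategory.whiskerLeft_comp_assoc, sq.fac_left, hu₁, Iso.inv_hom_id_assoc]

lemma curry_comp_evAt [MonoidalClosed K] {I X E : K} (g : I ⊗ X ⟶ E) (t : 𝟙_ K ⟶ I) :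
    MonoidalClosed.curry g ≫ evAt t = lift (toUnit X ≫ t) (𝟙 X) ≫ g := by
  have : lift (toUnit _ ≫ t) (𝟙 _) ≫ I ◁ MonoidalClosed.curry g =
      MonoidalClosed.curry g ≫ lift (toUnit _ ≫ t) (𝟙 _) := by
    ext <;> simp
  rw [evAt, ← reassoc_of% this, ← MonoidalClosed.uncurry_eq, MonoidalClosed.uncurry_curry]

end Cartesian

lemma exists_ihom_pathObj_of_homotopy {I D E B A : C} (p : E ⟶ B) (w : D ⊗ I ⟶ A ⟹ E)
    (g : D ⟶ A ⟹ B) (hw : w ≫ (ihom A).map p = fst D I ≫ g) :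
    ∃ H : D ⟶ A ⟹ pathObj I p, ∀ t : 𝟙_ C ⟶ I,
      H ≫ (ihom A).map (pullback.fst _ _ ≫ evAt t) = (ρ_ D).inv ≫ D ◁ t ≫ w := by
  let swap : I ⊗ (A ⊗ D) ⟶ A ⊗ (D ⊗ I) :=
    lift (snd _ _ ≫ fst _ _) (lift (snd _ _ ≫ snd _ _) (fst _ _))
  let path : A ⊗ D ⟶ I ⟹ E := MonoidalClosed.curry (swap ≫ MonoidalClosed.uncurry w)
  have hpath : path ≫ (ihom I).map p =
      MonoidalClosed.uncurry g ≫ MonoidalClosed.curry (snd I B) := by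
    rw [← MonoidalClosed.curry_natural_left, ← MonoidalClosed.curry_natural_right,
      Category.assoc, ← MonoidalClosed.uncurry_natural_right, hw,
      MonoidalClosed.uncurry_natural_left]
    congr 1
    simp [swap]
  let P : A ⊗ D ⟶ pathObj I p := pullback.lift path _ hpath
  refine ⟨MonoidalClosed.curry P, fun t => ?_⟩
  have hP : P ≫ pullback.fst _ _ ≫ evAt t = path ≫ evAt t := pullback.lift_fst_assoc _ _ _ _
  rw [← MonoidalClosed.curry_natural_right, hP, curry_comp_evAt,
    MonoidalClosed.curry_eq_iff, MonoidalClosed.uncurry_natural_left,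
    MonoidalClosed.uncurry_natural_left, ← Category.assoc, ← Category.assoc]
  congr 1
  ext <;> simp [swap]

lemma comp_map_evBdry_eq_curry_lift [HasBinaryCoproducts C] {I E B A D : C}
    (c : 𝟙_ C ⨿ 𝟙_ C ⟶ I) (p : E ⟶ B) (H : D ⟶ A ⟹ pathObj I p) (f₀ f₁ : D ⟶ A ⟹ E)
    (h : MonoidalClosed.uncurry f₀ ≫ p = MonoidalClosed.uncurry f₁ ≫ p)
    (h₀ : H ≫ (ihom A).map (pullback.fst _ _ ≫ evAt (coprod.inl ≫ c)) = f₀)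
    (h₁ : H ≫ (ihom A).map (pullback.fst _ _ ≫ evAt (coprod.inr ≫ c)) = f₁) :
    H ≫ (ihom A).map (evBdry c p) = MonoidalClosed.curry (pullback.lift _ _ h) := by
  rw [MonoidalClosed.eq_curry_iff, MonoidalClosed.uncurry_natural_right]
  apply pullback.hom_ext
  · rw [pullback.lift_fst, ← h₀, Category.assoc, evBdry, pullback.lift_fst,
      MonoidalClosed.uncurry_natural_right]
  · rw [pullback.lift_snd, ← h₁, Category.assoc, evBdry, pullback.lift_snd,
      MonoidalClosed.uncurry_natural_right]

/-- the homotopy-lifting lemma.  In a locally cartesian closed model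
category in which `I` is a good cylinder object for the terminal object and cofibrations
are preserved by products, given a factorization `[A,E] --q--> C₀ --r--> [A,B]` of the
postcomposition map with `q` a trivial fibration, any two maps `f₀ f₁ : D ⟶ [A,E]`
agreeing in `C₀` are connected by a fibrewise homotopy `H : D ⟶ [A, P^I_B(E)]`. -/
theorem stmt17 [HasBinaryCoproducts C]
    (cof fib weq : MorphismProperty C)
    {I : C} (c : (𝟙_ C) ⨿ (𝟙_ C) ⟶ I) (hc : cof c)
    (hprod : ∀ (X : C) {A B : C} (i : A ⟶ B), cof i → cof (X ◁ i))
    (hlift : ∀ {A B X Y : C} (i : A ⟶ B) (p : X ⟶ Y), cof i → fib p → weq p →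
      ∀ (u : A ⟶ X) (v : B ⟶ Y), u ≫ p = i ≫ v → ∃ w : B ⟶ X, i ≫ w = u ∧ w ≫ p = v)
    {E B : C} (p : E ⟶ B) (A : C)
    {C₀ : C} (q : (A ⟹ E) ⟶ C₀) (r : C₀ ⟶ (A ⟹ B))
    (hfac : q ≫ r = (ihom A).map p) (hq1 : fib q) (hq2 : weq q)
    (D : C) (d : D ⟶ C₀) (f₀ f₁ : D ⟶ (A ⟹ E)) (h₀ : f₀ ≫ q = d) (h₁ : f₁ ≫ q = d) :
    ∃ H : D ⟶ (A ⟹ pathObj I p),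
      H ≫ (ihom A).map (evBdry c p) =
        MonoidalClosed.curry (pullback.lift
          (MonoidalClosed.uncurry f₀) (MonoidalClosed.uncurry f₁)
          (by rw [← MonoidalClosed.uncurry_natural_right,
                  ← MonoidalClosed.uncurry_natural_right, ← hfac,
                  ← Category.assoc, ← Category.assoc, h₀, h₁])) := by
  have : HasLiftingProperty (D ◁ c) q := ⟨fun sq => by
    obtain ⟨l, hl, hr⟩ := hlift _ _ (hprod D c hc) hq1 hq2 _ _ sq.w
    exact CommSq.HasLift.mk' ⟨l, hl, hr⟩⟩
  obtain ⟨w, hw₀, hw₁, hwq⟩ :=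
    exists_homotopy_of_hasLiftingProperty c q f₀ f₁ (h₀.trans h₁.symm)
  obtain ⟨H, hH⟩ := exists_ihom_pathObj_of_homotopy p w (d ≫ r)
    (by rw [← hfac, reassoc_of% hwq, reassoc_of% h₀])
  exact ⟨H, comp_map_evBdry_eq_curry_lift c p H f₀ f₁ _ ((hH _).trans hw₀) ((hH _).trans hw₁)⟩
end
end
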